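/- arXiv:1412.0519 — 5 statements merged into one kernel-verified Lean document; each statement's English description precedes it below -/
import Mathlib

section
/- Let n ≥ 2 and let s ≡ 2^n − 1 (mod 2^(n+1)). Then the (n−1)-st iterate of T satisfies T^[n−1](s) ≡ 1 (mod 4). -/
def T (n : ℕ) : ℕ := if n % 2 = 0 then n / 2 else (3 * n + 1) / 2

lemma key : ∀ j m : ℕ, 1 ≤ m → T^[j] (2 ^ (j + 1) * m - 1) = 2 * 3 ^ j * m - 1 := by
  intro j
  induction j with
  | zero => intro m hm; simp [pow_succ]
  | succ j ih =>
    intro m hm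
    rw [Function.iterate_succ_apply]
    have h1 : T (2 ^ (j + 2) * m - 1) = 2 ^ (j + 1) * (3 * m) - 1 := by
      have hge : 1 ≤ 2 ^ (j + 2) * m := Nat.one_le_iff_ne_zero.mpr (by positivity)
      have hb : 1 ≤ 2 ^ (j + 1) * m := Nat.one_le_iff_ne_zero.mpr (by positivity)
      have hodd : (2 ^ (j + 2) * m - 1) % 2 = 1 := by
        have h : 2 ^ (j + 2) * m = 2 * (2 ^ (j + 1) * m) := by ring
        rw [h]; omega
      unfold T
      rw [hodd]
      simp only [if_neg (by omega : ¬ (1 = 0))]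
      have : 3 * (2 ^ (j + 2) * m - 1) + 1 = 2 * (2 ^ (j + 1) * (3 * m) - 1) := by
        have h2 : 2 ^ (j + 2) * m = 2 * (2 ^ (j + 1) * m) := by ring
        have hc : 2 ^ (j + 1) * (3 * m) = 3 * (2 ^ (j + 1) * m) := by ring
        omega
      omega
    rw [h1, ih (3 * m) (by omega)]
    ring_nf
  
theorem stmt_6 : ∀ n : ℕ, 2 ≤ n → ∀ s : ℕ, s % 2 ^ (n + 1) = 2 ^ n - 1 →
    T^[n - 1] s % 4 = 1 := by
  intro n hn s hs
  obtain ⟨q, hq⟩ : ∃ q, s = 2 ^ (n + 1) * q + (2 ^ n - 1) := by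
    exact ⟨s / 2 ^ (n + 1), by rw [← hs]; exact (Nat.div_add_mod s _).symm⟩
  have hpow : 1 ≤ 2 ^ n := Nat.one_le_two_pow
  have hs' : s = 2 ^ ((n - 1) + 1) * (2 * q + 1) - 1 := by
    have : n - 1 + 1 = n := by omega
    rw [this]
    have h2 : 2 ^ (n + 1) = 2 * 2 ^ n := by ring
    rw [hq, h2]; ring_nf; omega
  rw [hs', key (n - 1) (2 * q + 1) (by omega)]
  have hodd : 3 ^ (n - 1) % 2 = 1 := Nat.pow_mod 3 (n-1) 2 ▸ by simp
  have : 2 * 3 ^ (n - 1) * (2 * q + 1) % 4 = 2 := by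
    obtain ⟨k, hk⟩ : ∃ k, 3 ^ (n - 1) = 2 * k + 1 := ⟨3 ^ (n-1) / 2, by omega⟩
    rw [hk]; ring_nf; omega
  omega
end

section
/- Let n ≥ 2 and s ≡ 2^n − 1 (mod 2^(n+1)). Then for every k with 0 ≤ k ≤ n − 2, the iterate T^[k](s) ≡ 3 (mod 4), and the sequence T^[0](s), T^[1](s), …, T^[n−1](s) is strictly increasing. -/
lemma T_key (m s : ℕ) (h : s % 2 ^ (m + 1 + 1) = 2 ^ (m + 1) - 1) :
    T s % 2 ^ (m + 1) = 2 ^ m - 1 := by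
  set b := 2 ^ m with hb
  have hb1 : 1 ≤ b := Nat.one_le_two_pow
  have h2 : (2:ℕ) ^ (m+1) = 2 * b := by rw [pow_succ]; ring
  have h4 : (2:ℕ) ^ (m+1+1) = 4 * b := by rw [pow_succ, pow_succ]; ring
  obtain ⟨a, hs⟩ : ∃ a, s = 4 * (b * a) + (2 * b - 1) := by
    refine ⟨s / (4 * b), ?_⟩
    have := Nat.div_add_mod s (2 ^ (m+1+1))
    rw [h, h2, h4] at this
    have hba : 4 * b * (s / (4 * b)) = 4 * (b * (s / (4 * b))) := by ring
    omega
  have hodd : s % 2 = 1 := by omega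
  have hT : T s = 6 * (b * a) + 3 * b - 1 := by
    unfold T
    rw [hodd]
    simp only [if_neg (by omega : ¬ (1:ℕ) = 0)]
    omega
  rw [hT, h2]
  have hr : (2 * b) * (3 * a + 1) = 6 * (b * a) + 2 * b := by ring
  have heq : 6 * (b * a) + 3 * b - 1 = (b - 1) + (2 * b) * (3 * a + 1) := by omega
  rw [heq, Nat.add_mul_mod_self_left, Nat.mod_eq_of_lt (by omega)]

lemma T_iter (k : ℕ) : ∀ m s : ℕ, s % 2 ^ (m + k + 1) = 2 ^ (m + k) - 1 →
    T^[k] s % 2 ^ (m + 1) = 2 ^ m - 1 := by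
  induction k with
  | zero => intro m s h; simpa using h
  | succ k ih =>
    intro m s h
    rw [Function.iterate_succ_apply]
    apply ih
    have := T_key (m + k) s (by rw [show m+k+1+1 = m+(k+1)+1 by ring, show m+k+1 = m+(k+1) by ring]; exact h)
    exact this

theorem stmt_8 : ∀ n : ℕ, 2 ≤ n → ∀ s : ℕ, s % 2 ^ (n + 1) = 2 ^ n - 1 →
    (∀ k : ℕ, k ≤ n - 2 → T^[k] s % 4 = 3) ∧
    (∀ k : ℕ, k < n - 1 → T^[k] s < T^[k + 1] s) := by
  intro n hn s hs
  have key : ∀ k : ℕ, k ≤ n - 2 → T^[k] s % 4 = 3 := by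
    intro k hk
    obtain ⟨m, hm⟩ : ∃ m, n = m + k ∧ 2 ≤ m := ⟨n - k, by omega⟩
    have := T_iter k m s (by rw [← hm.1]; exact hs)
    have hdvd : (4:ℕ) ∣ 2 ^ (m + 1) := by
      have : (2:ℕ)^2 ∣ 2 ^ (m+1) := pow_dvd_pow 2 (by omega)
      simpa using this
    have h4 : T^[k] s % 4 = (2 ^ m - 1) % 4 := by
      rw [← Nat.mod_mod_of_dvd _ hdvd, this]
    rw [h4]
    obtain ⟨m', hm'⟩ : ∃ m', m = m' + 2 := ⟨m - 2, by omega⟩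
    have : (2:ℕ) ^ m = 4 * 2 ^ m' := by rw [hm', pow_succ, pow_succ]; ring
    have h1 : 1 ≤ (2:ℕ)^m' := Nat.one_le_two_pow
    omega
  refine ⟨key, fun k hk => ?_⟩
  have h3 := key k (by omega)
  rw [Function.iterate_succ_apply']
  set x := T^[k] s
  have hodd : x % 2 = 1 := by omega
  unfold T
  rw [hodd]
  simp only [if_neg (by omega : ¬ (1:ℕ) = 0)]
  omega
end

section
/- If two positive integers s and s' satisfy s ≡ s' (mod 2^k), then for every j ≤ k the parities of T^[j'](s) and T^[j'](s') agree for all j' < j, and T^[j](s) ≡ T^[j](s') (mod 2^(k−j)). -/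
lemma key_s15 (m a b : ℕ) (h : a % 2 ^ (m + 1) = b % 2 ^ (m + 1)) :
    a % 2 = b % 2 ∧ T a % 2 ^ m = T b % 2 ^ m := by
  have hpar : a % 2 = b % 2 := by
    have := congrArg (· % 2) h
    simpa [Nat.mod_mod_of_dvd, Nat.pow_succ, Nat.mod_mod_of_dvd a (dvd_pow_self 2 (Nat.succ_ne_zero m)),
      Nat.mod_mod_of_dvd b (dvd_pow_self 2 (Nat.succ_ne_zero m))] using this
  refine ⟨hpar, ?_⟩
  have hd : ∀ x y : ℕ, x % 2 ^ (m + 1) = y % 2 ^ (m + 1) → x / 2 % 2 ^ m = y / 2 % 2 ^ m := by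
    intro x y hxy
    have hx : x % (2 * 2 ^ m) / 2 = x / 2 % 2 ^ m := Nat.mod_mul_right_div_self x 2 (2 ^ m)
    have hy : y % (2 * 2 ^ m) / 2 = y / 2 % 2 ^ m := Nat.mod_mul_right_div_self y 2 (2 ^ m)
    rw [← hx, ← hy]
    congr 1
    simpa [pow_succ, mul_comm] using hxy
  unfold T
  rw [hpar]
  by_cases hb : b % 2 = 0
  · simp only [hb, if_true]
    exact hd a b h
  · simp only [hb, if_neg hb]
    apply hd
    have : (3 * a + 1) % 2 ^ (m + 1) = (3 * b + 1) % 2 ^ (m + 1) :=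
      Nat.ModEq.add_right 1 (Nat.ModEq.mul_left 3 h)
    exact this

theorem stmt_15 : ∀ s s' k : ℕ, 0 < s → 0 < s' → s % 2 ^ k = s' % 2 ^ k →
    ∀ j : ℕ, j ≤ k →
      (∀ j' : ℕ, j' < j → T^[j'] s % 2 = T^[j'] s' % 2) ∧
      T^[j] s % 2 ^ (k - j) = T^[j] s' % 2 ^ (k - j) := by
  intro s s' k _ _ h j
  induction j with
  | zero => intro _; exact ⟨fun j' hj' => absurd hj' (Nat.not_lt_zero j'), h⟩
  | succ n ih =>
    intro hjk
    obtain ⟨hpar, hmod⟩ := ih (Nat.le_of_succ_le hjk)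
    have hm : k - n = (k - (n + 1)) + 1 := by omega
    rw [hm] at hmod
    obtain ⟨hp, hT⟩ := key_s15 (k - (n + 1)) _ _ hmod
    refine ⟨fun j' hj' => ?_, ?_⟩
    · rcases Nat.lt_or_ge j' n with h' | h'
      · exact hpar j' h'
      · have : j' = n := by omega
        subst this; exact hp
    · simpa [Function.iterate_succ_apply'] using hT
end

section
/- If every positive integer s with s ≡ 3 (mod 12) or s ≡ 7 (mod 12) has finite stopping time (there exists k ≥ 1 with T^[k](s) < s), then every positive integer s > 1 has finite stopping time. -/
theorem stmt_16 :
    (∀ s : ℕ, 0 < s → (s % 12 = 3 ∨ s % 12 = 7) → ∃ k : ℕ, 1 ≤ k ∧ T^[k] s < s) →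
    ∀ s : ℕ, 1 < s → ∃ k : ℕ, 1 ≤ k ∧ T^[k] s < s := by
  intro H s
  induction s using Nat.strong_induction_on with
  | _ s IH =>
  intro hs
  rcases Nat.even_or_odd s with he | ho
  · -- even: k = 1
    refine ⟨1, le_refl _, ?_⟩
    have h2 : s % 2 = 0 := Nat.even_iff.mp he
    simp only [Function.iterate_one, T, h2, if_true]
    omega
  · have h2 : s % 2 = 1 := Nat.odd_iff.mp ho
    by_cases h4 : s % 4 = 1
    · -- k = 2
      refine ⟨2, by norm_num, ?_⟩
      obtain ⟨a, rfl⟩ : ∃ a, s = 4 * a + 1 := ⟨s / 4, by omega⟩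
      have hT1 : T (4 * a + 1) = 6 * a + 2 := by
        simp only [T]; split <;> omega
      have hT2 : T (6 * a + 2) = 3 * a + 1 := by
        simp only [T]; split <;> omega
      show T (T (4 * a + 1)) < 4 * a + 1
      rw [hT1, hT2]; omega
    · -- s % 4 = 3, so s % 12 ∈ {3, 7, 11}
      have h4' : s % 4 = 3 := by omega
      by_cases h12 : s % 12 = 11
      · obtain ⟨t, rfl⟩ : ∃ t, s = 12 * t + 11 := ⟨s / 12, by omega⟩
        set m := 8 * t + 7 with hm
        have hTm : T m = 12 * t + 11 := by
          simp only [T, hm]; split <;> omega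
        have hmlt : m < 12 * t + 11 := by omega
        obtain ⟨j, hj1, hj2⟩ := IH m hmlt (by omega)
        have hj2' : 2 ≤ j := by
          by_contra h
          have hj : j = 1 := by omega
          subst hj
          simp only [Function.iterate_one] at hj2
          omega
        obtain ⟨i, rfl⟩ : ∃ i, j = i + 2 := ⟨j - 2, by omega⟩
        refine ⟨i + 1, by omega, ?_⟩
        have : T^[i + 2] m = T^[i + 1] (12 * t + 11) := by
          rw [Function.iterate_succ_apply, hTm]
        omega
      · exact H s (by omega) (by omega)
end

section
/- Every positive integer s > 1 has finite stopping time if and only if the Collatz conjecture holds, i.e., for every s ≥ 1 there exists k with T^[k](s) = 1. -/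
lemma T_pos {n : ℕ} (h : 1 ≤ n) : 1 ≤ T n := by
  unfold T
  split
  · omega
  · omega

lemma T_iter_pos {n : ℕ} (h : 1 ≤ n) (k : ℕ) : 1 ≤ T^[k] n := by
  induction k generalizing n with
  | zero => simpa
  | succ k ih =>
    rw [Function.iterate_succ_apply]
    exact ih (T_pos h)

theorem stmt_17 :
    (∀ s : ℕ, 1 < s → ∃ k : ℕ, 1 ≤ k ∧ T^[k] s < s) ↔
    (∀ s : ℕ, 1 ≤ s → ∃ k : ℕ, T^[k] s = 1) := by
  constructor
  · intro h s hs
    induction s using Nat.strong_induction_on with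
    | _ s ih =>
      rcases eq_or_lt_of_le hs with h1 | h1
      · exact ⟨0, h1.symm⟩
      · obtain ⟨k, _, hk⟩ := h s h1
        obtain ⟨m, hm⟩ := ih (T^[k] s) hk (T_iter_pos hs k)
        exact ⟨m + k, by rw [Function.iterate_add_apply, hm]⟩
  · intro h s hs
    obtain ⟨k, hk⟩ := h s (by omega)
    refine ⟨k, ?_, by omega⟩
    rcases Nat.eq_zero_or_pos k with rfl | hpos
    · simp at hk; omega
    · exact hpos
end
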